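/- Under the log-linear binary mediator model, linear outcome model, and A ⊥ U | X, the vector function ψ̃ with components ψ̃1=Y−θ1M−θ2A, ψ̃2=(Y−θ1M)·(M·exp(−θ3A)−h̃(X)), ψ̃3=M·exp(−θ3A) satisfies E(ψ̃|A,X)=E(ψ̃|X) almost surely. -/

import Mathlib

/-!
Conditioning first on `(M, A, X, U)` and then on `(A, X, U)`, the outcome and mediator models
turn `ψ̃₁` into `g(X, U)`, `ψ̃₃` into `exp h(X, U)` and `ψ̃₂` into `(θ₂ A + g(X, U)) k(X, U)` with
`k = exp h - h̃`. Since `A ⊥ U | X`, conditioning a function of `(X, U)` on `(A, X)` is the same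
as conditioning it on `X`. The factor `θ₂ A` of `ψ̃₂` is handled by replacing `A` with `E[A | X]`,
which is what conditioning on `(X, U)` does: the remainder `θ₂ (A - E[A | X]) k` has conditional
mean zero given `(A, X)` because `k` has conditional mean zero given `X`, hence given `(A, X)`.
The integrability of `M exp(-θ₃ A)` follows from `E[M | A, X, U] = exp(θ₃ A + h)` through a
pull-out identity for lower Lebesgue integrals.
-/

open MeasureTheory ProbabilityTheory Set

section SubSigmaAlgebras

variable {Ω : Type*}

lemma isPiSystem_image2_inter (m₁ m₂ : MeasurableSpace Ω) :
    IsPiSystem (image2 (· ∩ ·) {s | MeasurableSet[m₁] s} {t | MeasurableSet[m₂] t}) := by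
  rintro _ ⟨s₁, hs₁, t₁, ht₁, rfl⟩ _ ⟨s₂, hs₂, t₂, ht₂, rfl⟩ -
  exact ⟨s₁ ∩ s₂, hs₁.inter hs₂, t₁ ∩ t₂, ht₁.inter ht₂, inter_inter_inter_comm _ _ _ _⟩

lemma sup_eq_generateFrom_image2_inter (m₁ m₂ : MeasurableSpace Ω) :
    m₁ ⊔ m₂ = MeasurableSpace.generateFrom
      (image2 (· ∩ ·) {s | MeasurableSet[m₁] s} {t | MeasurableSet[m₂] t}) := by
  refine le_antisymm (sup_le ?_ ?_) (MeasurableSpace.generateFrom_le ?_)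
  · exact fun s hs ↦ MeasurableSpace.measurableSet_generateFrom ⟨s, hs, univ, .univ, inter_univ s⟩
  · exact fun t ht ↦ MeasurableSpace.measurableSet_generateFrom ⟨univ, .univ, t, ht, univ_inter t⟩
  · rintro _ ⟨s, hs, t, ht, rfl⟩
    exact (le_sup_left (b := m₂) s hs).inter (le_sup_right (a := m₁) t ht)

lemma comap_prodMk_eq_sup {Ω β γ : Type*} [mβ : MeasurableSpace β] [mγ : MeasurableSpace γ]
    (f : Ω → β) (g : Ω → γ) :
    MeasurableSpace.comap (fun ω ↦ (f ω, g ω)) inferInstance = mβ.comap f ⊔ mγ.comap g :=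
  MeasurableSpace.comap_prodMk f g

end SubSigmaAlgebras

section Integrals

variable {Ω : Type*} {m mΩ : MeasurableSpace Ω} {μ : Measure Ω}

lemma setIntegral_inter_eq_setIntegral_mul_indicator (t : Set Ω) {s : Set Ω} (hs : MeasurableSet s)
    (f : Ω → ℝ) :
    ∫ ω in t ∩ s, f ω ∂μ = ∫ ω in t, f ω * s.indicator 1 ω ∂μ := by
  rw [← setIntegral_indicator hs]
  congr 1 with ω
  by_cases hω : ω ∈ s <;> simp [hω]

lemma abs_condExp_indicator_le_one (s : Set Ω) : ∀ᵐ ω ∂μ, |(μ⟦s | m⟧) ω| ≤ 1 :=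
  ae_bdd_abs_condExp_of_ae_bdd_abs (.of_forall fun ω ↦ by
    by_cases hω : ω ∈ s <;> simp [hω])

end Integrals

section CondExp

variable {Ω : Type*} {m m₁ m₂ mΩ : MeasurableSpace Ω} {μ : Measure Ω} [IsFiniteMeasure μ]

lemma ae_eq_condExp_sup_of_forall_setIntegral_inter_eq (hm₁ : m₁ ≤ mΩ) (hm₂ : m₂ ≤ mΩ)
    {f c : Ω → ℝ} (hf : Integrable f μ) (hc : Integrable c μ)
    (hcm : StronglyMeasurable[m₁ ⊔ m₂] c)
    (h : ∀ s t, MeasurableSet[m₁] s → MeasurableSet[m₂] t →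
      ∫ ω in s ∩ t, f ω ∂μ = ∫ ω in s ∩ t, c ω ∂μ) :
    μ[f | m₁ ⊔ m₂] =ᵐ[μ] c := by
  have hm : m₁ ⊔ m₂ ≤ mΩ := sup_le hm₁ hm₂
  suffices key : ∀ s, MeasurableSet[m₁ ⊔ m₂] s → ∫ ω in s, f ω ∂μ = ∫ ω in s, c ω ∂μ from
    (ae_eq_condExp_of_forall_setIntegral_eq hm hf (fun _ _ _ ↦ hc.integrableOn)
      (fun s hs _ ↦ (key s hs).symm) hcm.aestronglyMeasurable).symm
  intro s hs
  induction s, hs using MeasurableSpace.induction_on_inter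
    (sup_eq_generateFrom_image2_inter m₁ m₂) (isPiSystem_image2_inter m₁ m₂) with
  | empty => simp
  | basic _ hst =>
    obtain ⟨s, hs, t, ht, rfl⟩ := hst
    exact h s t hs ht
  | compl t htm iht =>
    have hf_split := integral_add_compl (hm t htm) hf
    have hc_split := integral_add_compl (hm t htm) hc
    have huniv : ∫ ω, f ω ∂μ = ∫ ω, c ω ∂μ := by simpa using h univ univ .univ .univ
    linarith
  | iUnion t hdisj htm iht =>
    exact (hasSum_integral_iUnion (fun i ↦ hm _ (htm i)) hdisj hf.integrableOn).unique
      (by simpa only [iht] using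
        hasSum_integral_iUnion (fun i ↦ hm _ (htm i)) hdisj hc.integrableOn)

lemma setIntegral_mul_condExp (hm : m ≤ mΩ) {t : Set Ω} (ht : MeasurableSet[m] t) {c g : Ω → ℝ}
    (hc : StronglyMeasurable[m] c) (hg : Integrable g μ)
    (hcg : Integrable (fun ω ↦ c ω * g ω) μ) :
    ∫ ω in t, c ω * g ω ∂μ = ∫ ω in t, c ω * μ[g | m] ω ∂μ := by
  rw [← setIntegral_condExp hm hcg ht]
  exact setIntegral_congr_ae (hm t ht)
    (by filter_upwards [condExp_mul_of_stronglyMeasurable_left hc hcg hg] with ω hω _ using hω)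

lemma condExp_ae_eq_condExp_of_condExp_ae_eq (hm : m ≤ mΩ) (h₁ : m₁ ≤ m) (h₂ : m₂ ≤ m)
    {ψ φ : Ω → ℝ} (hψ : μ[ψ | m] =ᵐ[μ] φ) (hφ : μ[φ | m₁] =ᵐ[μ] μ[φ | m₂]) :
    μ[ψ | m₁] =ᵐ[μ] μ[ψ | m₂] :=
  ((condExp_condExp_of_le h₁ hm).symm.trans (condExp_congr_ae hψ)).trans
    (hφ.trans ((condExp_condExp_of_le h₂ hm).symm.trans (condExp_congr_ae hψ)).symm)

lemma condExp_sub_ae_eq_of_condExp_ae_eq_add (hm : m ≤ mΩ) {Y Z V : Ω → ℝ}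
    (hY : Integrable Y μ) (hZ : Integrable Z μ) (hZm : StronglyMeasurable[m] Z)
    (h : μ[Y | m] =ᵐ[μ] fun ω ↦ Z ω + V ω) :
    μ[fun ω ↦ Y ω - Z ω | m] =ᵐ[μ] V := by
  filter_upwards [condExp_sub hY hZ m, h] with ω hsub hYω
  rw [show (fun ω ↦ Y ω - Z ω) = Y - Z from rfl, hsub, Pi.sub_apply, hYω,
    condExp_of_stronglyMeasurable hm hZm hZ]
  ring

lemma condExp_mul_ae_eq_of_condExp_ae_eq (hm : m ≤ mΩ) (h₁ : m₁ ≤ m) {u v p q : Ω → ℝ}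
    (hu : Integrable u μ) (hv : Integrable v μ) (hvm : StronglyMeasurable[m] v)
    (hpm : StronglyMeasurable[m₁] p) (huv : Integrable (fun ω ↦ u ω * v ω) μ)
    (hup : μ[u | m] =ᵐ[μ] p) (hvq : μ[v | m₁] =ᵐ[μ] q) :
    μ[fun ω ↦ u ω * v ω | m₁] =ᵐ[μ] fun ω ↦ p ω * q ω := by
  have hpv : μ[fun ω ↦ u ω * v ω | m] =ᵐ[μ] fun ω ↦ p ω * v ω := by
    filter_upwards [condExp_mul_of_stronglyMeasurable_right hvm huv hu, hup] with ω h hω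
    rw [show (fun ω ↦ u ω * v ω) = u * v from rfl, h, Pi.mul_apply, hω]
  filter_upwards [(condExp_condExp_of_le h₁ hm).symm.trans (condExp_congr_ae hpv),
    condExp_mul_of_stronglyMeasurable_left hpm (integrable_condExp.congr hpv) hv, hvq]
    with ω h₁ h₂ h₃
  rw [h₁, show (fun ω ↦ p ω * v ω) = p * v from rfl, h₂, Pi.mul_apply, h₃]

end CondExp

section PullOut

open scoped ENNReal

variable {Ω : Type*} {m mΩ : MeasurableSpace Ω} {μ : Measure Ω} [IsFiniteMeasure μ]

lemma lintegral_mul_ofReal_condExp (hm : m ≤ mΩ) {f : Ω → ℝ≥0∞} (hf : Measurable[m] f)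
    {g : Ω → ℝ} (hg : Integrable g μ) (hg0 : 0 ≤ᵐ[μ] g) :
    ∫⁻ ω, f ω * ENNReal.ofReal (μ[g | m] ω) ∂μ = ∫⁻ ω, f ω * ENNReal.ofReal (g ω) ∂μ := by
  have hdens : ∀ {φ : Ω → ℝ}, Integrable φ μ →
      ∫⁻ ω, f ω * ENNReal.ofReal (φ ω) ∂μ
        = ∫⁻ ω, f ω ∂(μ.withDensity fun ω ↦ ENNReal.ofReal (φ ω)).trim hm := fun hφ ↦ by
    rw [lintegral_trim hm hf, lintegral_withDensity_eq_lintegral_mul₀'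
      hφ.1.aemeasurable.ennreal_ofReal (hf.mono hm le_rfl).aemeasurable]
    simp only [Pi.mul_apply, mul_comm]
  rw [hdens integrable_condExp, hdens hg]
  congr 1
  refine @Measure.ext _ m _ _ fun s hs ↦ ?_
  rw [trim_measurableSet_eq hm hs, trim_measurableSet_eq hm hs, withDensity_apply _ (hm s hs),
    withDensity_apply _ (hm s hs),
    ← ofReal_integral_eq_lintegral_ofReal integrable_condExp.integrableOn
      (ae_restrict_of_ae (condExp_nonneg hg0)),
    ← ofReal_integral_eq_lintegral_ofReal hg.integrableOn (ae_restrict_of_ae hg0),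
    setIntegral_condExp hm hg hs]

lemma integrable_mul_of_integrable_mul_condExp (hm : m ≤ mΩ) {f g : Ω → ℝ}
    (hf : StronglyMeasurable[m] f) (hg : Integrable g μ) (hg0 : 0 ≤ᵐ[μ] g)
    (hfg : Integrable (fun ω ↦ f ω * μ[g | m] ω) μ) :
    Integrable (fun ω ↦ f ω * g ω) μ := by
  refine ⟨(hf.mono hm).aestronglyMeasurable.mul hg.1, ?_⟩
  have henorm : ∀ {φ : Ω → ℝ}, 0 ≤ᵐ[μ] φ →
      ∫⁻ ω, ‖f ω * φ ω‖ₑ ∂μ = ∫⁻ ω, ‖f ω‖ₑ * ENNReal.ofReal (φ ω) ∂μ := fun hφ ↦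
    lintegral_congr_ae (by
      filter_upwards [hφ] with ω hω
      rw [enorm_mul, Real.enorm_eq_ofReal hω])
  have hfin := hfg.2
  rw [HasFiniteIntegral, henorm (condExp_nonneg hg0),
    lintegral_mul_ofReal_condExp (f := (‖f ·‖ₑ)) hm (measurable_enorm.comp hf.measurable) hg hg0,
    ← henorm hg0] at hfin
  exact hfin

end PullOut

section ExponentialWeight

open Real

variable {Ω : Type*} {m mΩ : MeasurableSpace Ω} {μ : Measure Ω} [IsFiniteMeasure μ]
  {M A E : Ω → ℝ} {θ : ℝ}

lemma integrable_mul_exp_neg_mul_of_condExp_ae_eq (hm : m ≤ mΩ) (hM : Integrable M μ)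
    (hM0 : 0 ≤ᵐ[μ] M) (hAm : StronglyMeasurable[m] A) (hE : Integrable (fun ω ↦ exp (E ω)) μ)
    (hmed : μ[M | m] =ᵐ[μ] fun ω ↦ exp (θ * A ω + E ω)) :
    Integrable (fun ω ↦ M ω * exp (-θ * A ω)) μ := by
  have hweight : Integrable (fun ω ↦ exp (-θ * A ω) * M ω) μ :=
    integrable_mul_of_integrable_mul_condExp hm
      (continuous_exp.comp_stronglyMeasurable (hAm.const_mul (-θ))) hM hM0
      (hE.congr (by
        filter_upwards [hmed] with ω hω
        rw [hω, ← exp_add]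
        ring_nf))
  simpa only [mul_comm] using hweight

lemma condExp_mul_exp_neg_mul_ae_eq (hm : m ≤ mΩ) (hM : Integrable M μ)
    (hM0 : 0 ≤ᵐ[μ] M) (hAm : StronglyMeasurable[m] A) (hE : Integrable (fun ω ↦ exp (E ω)) μ)
    (hmed : μ[M | m] =ᵐ[μ] fun ω ↦ exp (θ * A ω + E ω)) :
    μ[fun ω ↦ M ω * exp (-θ * A ω) | m] =ᵐ[μ] fun ω ↦ exp (E ω) := by
  have hexp : StronglyMeasurable[m] fun ω ↦ exp (-θ * A ω) :=
    continuous_exp.comp_stronglyMeasurable (hAm.const_mul (-θ))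
  have hint := integrable_mul_exp_neg_mul_of_condExp_ae_eq hm hM hM0 hAm hE hmed
  simp_rw [mul_comm (M _)] at hint ⊢
  filter_upwards [condExp_mul_of_stronglyMeasurable_left hexp hint hM, hmed] with ω h hω
  rw [show (fun ω ↦ exp (-θ * A ω) * M ω) = (fun ω ↦ exp (-θ * A ω)) * M from rfl, h,
    Pi.mul_apply, hω, ← exp_add]
  ring_nf

end ExponentialWeight

section CondIndep

variable {Ω : Type*} {m' m₁ m₂ mΩ : MeasurableSpace Ω} [StandardBorelSpace Ω]
  {μ : Measure Ω} [IsFiniteMeasure μ]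

lemma condExp_indicator_sup_ae_eq_of_condIndep {hm' : m' ≤ mΩ} (hm₁ : m₁ ≤ mΩ) (hm₂ : m₂ ≤ mΩ)
    (hind : CondIndep m' m₁ m₂ hm' μ) {s : Set Ω} (hs : MeasurableSet[m₁] s) :
    μ⟦s | m' ⊔ m₂⟧ =ᵐ[μ] μ⟦s | m'⟧ := by
  have hsΩ : MeasurableSet s := hm₁ s hs
  have hprod := (condIndep_iff m' m₁ m₂ hm' hm₁ hm₂ μ).mp hind
  refine ae_eq_condExp_sup_of_forall_setIntegral_inter_eq hm' hm₂
    ((integrable_const 1).indicator hsΩ) integrable_condExp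
    (stronglyMeasurable_condExp.mono le_sup_left) fun t u ht hu ↦ ?_
  have huΩ : MeasurableSet u := hm₂ u hu
  calc ∫ ω in t ∩ u, s.indicator 1 ω ∂μ
      = ∫ ω in t, (s ∩ u).indicator 1 ω ∂μ := by
        rw [← setIntegral_indicator huΩ, indicator_indicator, inter_comm u s]
    _ = ∫ ω in t, (μ⟦s ∩ u | m'⟧) ω ∂μ := (setIntegral_condExp hm'
        ((integrable_const 1).indicator (hsΩ.inter huΩ)) ht).symm
    _ = ∫ ω in t, (μ⟦s | m'⟧) ω * (μ⟦u | m'⟧) ω ∂μ :=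
        setIntegral_congr_ae (hm' t ht) (by filter_upwards [hprod s u hs hu] with ω hω _ using hω)
    _ = ∫ ω in t, (μ⟦s | m'⟧) ω * u.indicator 1 ω ∂μ :=
        (setIntegral_mul_condExp hm' ht stronglyMeasurable_condExp
          ((integrable_const 1).indicator huΩ)
          (((integrable_const 1).indicator huΩ).bdd_mul
            integrable_condExp.aestronglyMeasurable
            (by simpa using abs_condExp_indicator_le_one s))).symm
    _ = ∫ ω in t ∩ u, (μ⟦s | m'⟧) ω ∂μ :=
        (setIntegral_inter_eq_setIntegral_mul_indicator t huΩ _).symm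

theorem condExp_sup_ae_eq_condExp_of_condIndep {hm' : m' ≤ mΩ} (hm₁ : m₁ ≤ mΩ) (hm₂ : m₂ ≤ mΩ)
    (hind : CondIndep m' m₁ m₂ hm' μ) {f : Ω → ℝ} (hf : Integrable f μ)
    (hfm : StronglyMeasurable[m' ⊔ m₂] f) :
    μ[f | m₁ ⊔ m'] =ᵐ[μ] μ[f | m'] := by
  rw [sup_comm]
  refine ae_eq_condExp_sup_of_forall_setIntegral_inter_eq hm' hm₁ hf integrable_condExp
    (stronglyMeasurable_condExp.mono le_sup_left) fun t s ht hs ↦ ?_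
  have hsΩ : MeasurableSet s := hm₁ s hs
  have hind_s : Integrable (s.indicator (1 : Ω → ℝ)) μ := (integrable_const 1).indicator hsΩ
  have hind_le : ∀ᵐ ω ∂μ, ‖s.indicator (1 : Ω → ℝ) ω‖ ≤ 1 :=
    .of_forall fun ω ↦ by by_cases hω : ω ∈ s <;> simp [hω]
  have hcond_le : ∀ᵐ ω ∂μ, ‖(μ⟦s | m'⟧) ω‖ ≤ 1 := by
    simpa using abs_condExp_indicator_le_one (μ := μ) (m := m') s
  calc ∫ ω in t ∩ s, f ω ∂μ
      = ∫ ω in t, f ω * s.indicator 1 ω ∂μ := setIntegral_inter_eq_setIntegral_mul_indicator t hsΩ f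
    _ = ∫ ω in t, f ω * (μ⟦s | m' ⊔ m₂⟧) ω ∂μ :=
        setIntegral_mul_condExp (sup_le hm' hm₂) (le_sup_left (b := m₂) t ht) hfm hind_s
          (hf.mul_bdd hind_s.aestronglyMeasurable hind_le)
    _ = ∫ ω in t, (μ⟦s | m'⟧) ω * f ω ∂μ := setIntegral_congr_ae (hm' t ht) (by
        filter_upwards [condExp_indicator_sup_ae_eq_of_condIndep hm₁ hm₂ hind hs] with ω hω _
        rw [hω, mul_comm])
    _ = ∫ ω in t, (μ[f | m']) ω * s.indicator 1 ω ∂μ := by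
        rw [setIntegral_mul_condExp hm' ht stronglyMeasurable_condExp hf
          (hf.bdd_mul integrable_condExp.aestronglyMeasurable hcond_le),
          setIntegral_mul_condExp hm' ht stronglyMeasurable_condExp hind_s
          (integrable_condExp.mul_bdd hind_s.aestronglyMeasurable hind_le)]
        simp only [mul_comm]; rfl
    _ = ∫ ω in t ∩ s, (μ[f | m']) ω ∂μ :=
        (setIntegral_inter_eq_setIntegral_mul_indicator t hsΩ _).symm

theorem condExp_add_mul_sup_ae_eq_condExp_of_condIndep {hm' : m' ≤ mΩ} (hm₁ : m₁ ≤ mΩ)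
    (hm₂ : m₂ ≤ mΩ) (hind : CondIndep m' m₁ m₂ hm' μ) {a b k : Ω → ℝ}
    (ha : Integrable a μ) (hb : Integrable b μ) (hk : Integrable k μ)
    (ham : StronglyMeasurable[m₁ ⊔ m'] a) (hbm : StronglyMeasurable[m' ⊔ m₂] b)
    (hkm : StronglyMeasurable[m' ⊔ m₂] k) (hk0 : μ[k | m'] =ᵐ[μ] 0)
    (habk : Integrable (fun ω ↦ (a ω + b ω) * k ω) μ) :
    μ[fun ω ↦ (a ω + b ω) * k ω | m₁ ⊔ m'] =ᵐ[μ] μ[fun ω ↦ (a ω + b ω) * k ω | m'] := by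
  set ā := μ[a | m']
  have hā : μ[a | m' ⊔ m₂] =ᵐ[μ] ā := by
    have h := condExp_sup_ae_eq_condExp_of_condIndep hm₂ hm₁ hind.symm ha (by rwa [sup_comm])
    rwa [sup_comm] at h
  have hW : μ[fun ω ↦ (a ω + b ω) * k ω | m' ⊔ m₂] =ᵐ[μ] fun ω ↦ (ā ω + b ω) * k ω := by
    filter_upwards [condExp_mul_of_stronglyMeasurable_right hkm habk (ha.add hb),
      condExp_add ha hb (m' ⊔ m₂), hā] with ω h hab hω
    rw [show (fun ω ↦ (a ω + b ω) * k ω) = (fun ω ↦ a ω + b ω) * k from rfl, h, Pi.mul_apply,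
      show (fun ω ↦ a ω + b ω) = a + b from rfl, hab,
      Pi.add_apply, hω, condExp_of_stronglyMeasurable (sup_le hm' hm₂) hbm hb]
  have hW_int : Integrable (fun ω ↦ (ā ω + b ω) * k ω) μ := integrable_condExp.congr hW
  have hD_int : Integrable (fun ω ↦ (a ω - ā ω) * k ω) μ :=
    (habk.sub hW_int).congr (.of_forall fun ω ↦ by simp only [Pi.sub_apply]; ring)
  -- `a - ā` is `m₁ ⊔ m'`-measurable, and `k` is still centred given `m₁ ⊔ m'`
  have hD : μ[fun ω ↦ (a ω - ā ω) * k ω | m₁ ⊔ m'] =ᵐ[μ] 0 := by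
    filter_upwards [condExp_mul_of_stronglyMeasurable_left
      (ham.sub (stronglyMeasurable_condExp.mono le_sup_right)) hD_int hk,
      condExp_sup_ae_eq_condExp_of_condIndep hm₁ hm₂ hind hk hkm, hk0] with ω h hk' hk0'
    rw [show (fun ω ↦ (a ω - ā ω) * k ω) = (a - ā) * k from rfl, h, Pi.mul_apply, hk', hk0',
      Pi.zero_apply, mul_zero]
  calc μ[fun ω ↦ (a ω + b ω) * k ω | m₁ ⊔ m']
      = μ[(fun ω ↦ (ā ω + b ω) * k ω) + fun ω ↦ (a ω - ā ω) * k ω | m₁ ⊔ m'] := by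
        congr 1 with ω; simp only [Pi.add_apply]; ring
    _ =ᵐ[μ] μ[fun ω ↦ (ā ω + b ω) * k ω | m₁ ⊔ m'] := by
        filter_upwards [condExp_add hW_int hD_int (m₁ ⊔ m'), hD] with ω h hω
        rw [h, Pi.add_apply, hω, Pi.zero_apply, add_zero]
    _ =ᵐ[μ] μ[fun ω ↦ (ā ω + b ω) * k ω | m'] :=
        condExp_sup_ae_eq_condExp_of_condIndep hm₁ hm₂ hind hW_int
          (((stronglyMeasurable_condExp.mono (le_sup_left : m' ≤ m' ⊔ m₂)).add hbm).mul hkm)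
    _ =ᵐ[μ] μ[fun ω ↦ (a ω + b ω) * k ω | m'] :=
        (condExp_congr_ae hW).symm.trans (condExp_condExp_of_le le_sup_left (sup_le hm' hm₂))

end CondIndep

section MediatorModel

open Real

variable {Ω : Type*} {mΩ : MeasurableSpace Ω} [StandardBorelSpace Ω] {μ : Measure Ω}
  [IsFiniteMeasure μ] {mX mA mU mM : MeasurableSpace Ω} {hmX : mX ≤ mΩ}
  {Y M A G E : Ω → ℝ} {θ1 θ2 θ3 : ℝ}

theorem condExp_outcome_residual_sup_ae_eq_condExp (hmA : mA ≤ mΩ) (hmU : mU ≤ mΩ) (hmM : mM ≤ mΩ)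
    (hind : CondIndep mX mA mU hmX μ) (hY : Integrable Y μ) (hM : Integrable M μ)
    (hA : Integrable A μ) (hMm : StronglyMeasurable[mM] M) (hAm : StronglyMeasurable[mA] A)
    (hGm : StronglyMeasurable[mX ⊔ mU] G)
    (hout : μ[Y | mM ⊔ (mA ⊔ (mX ⊔ mU))] =ᵐ[μ] fun ω ↦ θ1 * M ω + θ2 * A ω + G ω) :
    μ[fun ω ↦ Y ω - θ1 * M ω - θ2 * A ω | mA ⊔ mX]
      =ᵐ[μ] μ[fun ω ↦ Y ω - θ1 * M ω - θ2 * A ω | mX] := by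
  have hall : mM ⊔ (mA ⊔ (mX ⊔ mU)) ≤ mΩ := sup_le hmM (sup_le hmA (sup_le hmX hmU))
  have hres := condExp_sub_ae_eq_of_condExp_ae_eq_add hall hY
    ((hM.const_mul θ1).add (hA.const_mul θ2))
    (((hMm.mono (by order)).const_mul θ1).add ((hAm.mono (by order)).const_mul θ2)) hout
  simp_rw [sub_sub]
  exact condExp_ae_eq_condExp_of_condExp_ae_eq hall (by order) (by order) hres
    (condExp_sup_ae_eq_condExp_of_condIndep hmA hmU hind (integrable_condExp.congr hres) hGm)

theorem condExp_mul_exp_neg_mul_sup_ae_eq_condExp (hmA : mA ≤ mΩ) (hmU : mU ≤ mΩ)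
    (hind : CondIndep mX mA mU hmX μ) (hM : Integrable M μ) (hM0 : 0 ≤ᵐ[μ] M)
    (hAm : StronglyMeasurable[mA] A) (hEm : StronglyMeasurable[mX ⊔ mU] E)
    (hE : Integrable (fun ω ↦ exp (E ω)) μ)
    (hmed : μ[M | mA ⊔ (mX ⊔ mU)] =ᵐ[μ] fun ω ↦ exp (θ3 * A ω + E ω)) :
    μ[fun ω ↦ M ω * exp (-θ3 * A ω) | mA ⊔ mX]
      =ᵐ[μ] μ[fun ω ↦ M ω * exp (-θ3 * A ω) | mX] := by
  have hF : mA ⊔ (mX ⊔ mU) ≤ mΩ := sup_le hmA (sup_le hmX hmU)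
  exact condExp_ae_eq_condExp_of_condExp_ae_eq hF (by order) (by order)
    (condExp_mul_exp_neg_mul_ae_eq hF hM hM0 (hAm.mono le_sup_left) hE hmed)
    (condExp_sup_ae_eq_condExp_of_condIndep hmA hmU hind hE
      (continuous_exp.comp_stronglyMeasurable hEm))

theorem condExp_weighted_residual_sup_ae_eq_condExp (hmA : mA ≤ mΩ) (hmU : mU ≤ mΩ) (hmM : mM ≤ mΩ)
    (hind : CondIndep mX mA mU hmX μ) (hY : Integrable Y μ) (hM : Integrable M μ)
    (hA : Integrable A μ) (hG : Integrable G μ) (hM0 : 0 ≤ᵐ[μ] M)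
    (hMm : StronglyMeasurable[mM] M) (hAm : StronglyMeasurable[mA] A)
    (hGm : StronglyMeasurable[mX ⊔ mU] G) (hEm : StronglyMeasurable[mX ⊔ mU] E)
    (hE : Integrable (fun ω ↦ exp (E ω)) μ)
    (hout : μ[Y | mM ⊔ (mA ⊔ (mX ⊔ mU))] =ᵐ[μ] fun ω ↦ θ1 * M ω + θ2 * A ω + G ω)
    (hmed : μ[M | mA ⊔ (mX ⊔ mU)] =ᵐ[μ] fun ω ↦ exp (θ3 * A ω + E ω)) :
    μ[fun ω ↦ (Y ω - θ1 * M ω) * (M ω * exp (-θ3 * A ω) - μ[fun ω ↦ exp (E ω) | mX] ω)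
        | mA ⊔ mX]
      =ᵐ[μ] μ[fun ω ↦ (Y ω - θ1 * M ω) * (M ω * exp (-θ3 * A ω) - μ[fun ω ↦ exp (E ω) | mX] ω)
        | mX] := by
  set H := μ[fun ω ↦ exp (E ω) | mX]
  by_cases hint : Integrable
    (fun ω ↦ (Y ω - θ1 * M ω) * (M ω * exp (-θ3 * A ω) - H ω)) μ
  swap
  · -- both sides are the junk value `0`
    simp only [condExp_of_not_integrable hint]; rfl
  have hF : mA ⊔ (mX ⊔ mU) ≤ mΩ := sup_le hmA (sup_le hmX hmU)
  have hall : mM ⊔ (mA ⊔ (mX ⊔ mU)) ≤ mΩ := sup_le hmM (sup_le hmA (sup_le hmX hmU))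
  have hHm : StronglyMeasurable[mX] H := stronglyMeasurable_condExp
  have hres := condExp_sub_ae_eq_of_condExp_ae_eq_add (Z := fun ω ↦ θ1 * M ω) hall hY
    (hM.const_mul θ1) ((hMm.mono (by order)).const_mul θ1) (by simpa only [add_assoc] using hout)
  have hweight := integrable_mul_exp_neg_mul_of_condExp_ae_eq hF hM hM0 (hAm.mono le_sup_left)
    hE hmed
  have hcentred := condExp_sub_ae_eq_of_condExp_ae_eq_add hF hweight integrable_condExp
    (hHm.mono (by order)) ((condExp_mul_exp_neg_mul_ae_eq hF hM hM0 (hAm.mono le_sup_left) hE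
      hmed).trans (.of_forall fun ω ↦ (add_sub_cancel (H ω) _).symm))
  have hcentred_m : StronglyMeasurable[mM ⊔ (mA ⊔ (mX ⊔ mU))]
      fun ω ↦ M ω * exp (-θ3 * A ω) - H ω := by
    have hMm' : StronglyMeasurable[mM ⊔ (mA ⊔ (mX ⊔ mU))] M := hMm.mono (by order)
    have hAm' : StronglyMeasurable[mM ⊔ (mA ⊔ (mX ⊔ mU))] A := hAm.mono (by order)
    have hHm' : StronglyMeasurable[mM ⊔ (mA ⊔ (mX ⊔ mU))] H := hHm.mono (by order)
    exact (hMm'.mul (continuous_exp.comp_stronglyMeasurable (hAm'.const_mul (-θ3)))).sub hHm'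
  have hW := condExp_mul_ae_eq_of_condExp_ae_eq hall le_sup_right
    (hY.sub (hM.const_mul θ1)) (hweight.sub integrable_condExp) hcentred_m
    ((hAm.const_mul θ2).mono le_sup_left |>.add (hGm.mono le_sup_right)) hint hres hcentred
  have hk0 : μ[fun ω ↦ exp (E ω) - H ω | mX] =ᵐ[μ] 0 := by
    filter_upwards [condExp_sub hE integrable_condExp mX] with ω h
    rw [show (fun ω ↦ exp (E ω) - H ω) = (fun ω ↦ exp (E ω)) - H from rfl, h, Pi.sub_apply,
      condExp_of_stronglyMeasurable hmX hHm integrable_condExp, sub_self, Pi.zero_apply]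
  exact condExp_ae_eq_condExp_of_condExp_ae_eq hF (by order) (by order) hW
    (condExp_add_mul_sup_ae_eq_condExp_of_condIndep hmA hmU hind (hA.const_mul θ2) hG
      (hE.sub integrable_condExp) ((hAm.const_mul θ2).mono le_sup_left) hGm
      ((continuous_exp.comp_stronglyMeasurable hEm).sub (hHm.mono le_sup_left)) hk0
      (integrable_condExp.congr hW))

end MediatorModel

theorem stmt17_general {Ω 𝓧 𝓤 : Type*} {mΩ : MeasurableSpace Ω} [StandardBorelSpace Ω]
    {m𝓧 : MeasurableSpace 𝓧} {m𝓤 : MeasurableSpace 𝓤}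
    (μ : Measure Ω) [IsProbabilityMeasure μ]
    (Y A M : Ω → ℝ) (X : Ω → 𝓧) (U : Ω → 𝓤)
    (hAm : Measurable A) (hMm : Measurable M)
    (hXm : Measurable X) (hUm : Measurable U)
    (hY : MemLp Y 2 μ) (hA : MemLp A 2 μ)
    (hMbin : ∀ᵐ ω ∂μ, M ω = 0 ∨ M ω = 1)
    (θ1 θ2 θ3 : ℝ) (g h : 𝓧 × 𝓤 → ℝ) (hg : Measurable g) (hh : Measurable h)
    (hgi : Integrable (fun ω => g (X ω, U ω)) μ)
    (hhi : Integrable (fun ω => Real.exp (h (X ω, U ω))) μ)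
    (hout : μ[Y | MeasurableSpace.comap (fun ω => (M ω, A ω, X ω, U ω)) inferInstance]
        =ᵐ[μ] fun ω => θ1 * M ω + θ2 * A ω + g (X ω, U ω))
    (hmed : μ[M | MeasurableSpace.comap (fun ω => (A ω, X ω, U ω)) inferInstance]
        =ᵐ[μ] fun ω => Real.exp (θ3 * A ω + h (X ω, U ω)))
    (hAU : CondIndepFun (MeasurableSpace.comap X m𝓧) hXm.comap_le A U μ)
    (htil : Ω → ℝ)
    (hhtil : htil =ᵐ[μ]
      μ[fun ω => Real.exp (h (X ω, U ω)) | MeasurableSpace.comap X m𝓧]) :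
    (μ[fun ω => Y ω - θ1 * M ω - θ2 * A ω
        | MeasurableSpace.comap (fun ω => (A ω, X ω)) inferInstance]
      =ᵐ[μ] μ[fun ω => Y ω - θ1 * M ω - θ2 * A ω | MeasurableSpace.comap X m𝓧])
    ∧ (μ[fun ω => (Y ω - θ1 * M ω) * (M ω * Real.exp (-θ3 * A ω) - htil ω)
        | MeasurableSpace.comap (fun ω => (A ω, X ω)) inferInstance]
      =ᵐ[μ] μ[fun ω => (Y ω - θ1 * M ω) * (M ω * Real.exp (-θ3 * A ω) - htil ω)
        | MeasurableSpace.comap X m𝓧])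
    ∧ (μ[fun ω => M ω * Real.exp (-θ3 * A ω)
        | MeasurableSpace.comap (fun ω => (A ω, X ω)) inferInstance]
      =ᵐ[μ] μ[fun ω => M ω * Real.exp (-θ3 * A ω) | MeasurableSpace.comap X m𝓧]) := by
  have hind := (condIndepFun_iff_condIndep _ hXm.comap_le A U μ).mp hAU
  have hXU : Measurable[MeasurableSpace.comap X m𝓧 ⊔ MeasurableSpace.comap U m𝓤]
      fun ω ↦ (X ω, U ω) := comap_prodMk_eq_sup X U ▸ comap_measurable _
  have hGm := (hg.comp hXU).stronglyMeasurable
  have hEm := (hh.comp hXU).stronglyMeasurable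
  have hMσ := (comap_measurable M).stronglyMeasurable
  have hAσ := (comap_measurable A).stronglyMeasurable
  have hYi := hY.integrable one_le_two
  have hAi := hA.integrable one_le_two
  have hM01 : ∀ᵐ ω ∂μ, 0 ≤ M ω ∧ ‖M ω‖ ≤ 1 := by
    filter_upwards [hMbin] with ω hω
    rcases hω with hω | hω <;> simp [hω]
  have hMi : Integrable M μ :=
    .of_bound hMm.aestronglyMeasurable 1 (hM01.mono fun _ hω ↦ hω.2)
  have hM0 : 0 ≤ᵐ[μ] M := hM01.mono fun _ hω ↦ hω.1
  have hψ2 : (fun ω ↦ (Y ω - θ1 * M ω) * (M ω * Real.exp (-θ3 * A ω) - htil ω)) =ᵐ[μ]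
      fun ω ↦ (Y ω - θ1 * M ω) * (M ω * Real.exp (-θ3 * A ω)
        - μ[fun ω => Real.exp (h (X ω, U ω)) | MeasurableSpace.comap X m𝓧] ω) := by
    filter_upwards [hhtil] with ω hω
    rw [hω]
  simp only [comap_prodMk_eq_sup] at hout hmed ⊢
  refine ⟨condExp_outcome_residual_sup_ae_eq_condExp hAm.comap_le hUm.comap_le hMm.comap_le hind
      hYi hMi hAi hMσ hAσ hGm hout, ?_,
    condExp_mul_exp_neg_mul_sup_ae_eq_condExp hAm.comap_le hUm.comap_le hind hMi hM0 hAσ hEm hhi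
      hmed⟩
  exact (condExp_congr_ae hψ2).trans
    ((condExp_weighted_residual_sup_ae_eq_condExp hAm.comap_le hUm.comap_le hMm.comap_le hind
      hYi hMi hAi hgi hM0 hMσ hAσ hGm hEm hhi hout hmed).trans (condExp_congr_ae hψ2).symm)

/-- under the log-linear binary mediator model, the linear outcome model
and `A ⊥ U | X`, the vector `ψ̃` with components `ψ̃1 = Y − θ1·M − θ2·A`,
`ψ̃2 = (Y − θ1·M)·(M·exp(−θ3·A) − h̃(X))`, `ψ̃3 = M·exp(−θ3·A)`, where
`h̃(X) = E[exp(h(X,U))|X]`, satisfies `E(ψ̃|A,X) = E(ψ̃|X)` almost surely. -/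
theorem stmt17 {Ω 𝓧 𝓤 : Type*} {mΩ : MeasurableSpace Ω} [StandardBorelSpace Ω] [Nonempty Ω]
    {m𝓧 : MeasurableSpace 𝓧} {m𝓤 : MeasurableSpace 𝓤}
    (μ : Measure Ω) [IsProbabilityMeasure μ]
    (Y A M : Ω → ℝ) (X : Ω → 𝓧) (U : Ω → 𝓤)
    (hYm : Measurable Y) (hAm : Measurable A) (hMm : Measurable M)
    (hXm : Measurable X) (hUm : Measurable U)
    (hY : MemLp Y 2 μ) (hA : MemLp A 2 μ)
    (hMbin : ∀ᵐ ω ∂μ, M ω = 0 ∨ M ω = 1)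
    (θ1 θ2 θ3 : ℝ) (g h : 𝓧 × 𝓤 → ℝ) (hg : Measurable g) (hh : Measurable h)
    (hgi : Integrable (fun ω => g (X ω, U ω)) μ)
    (hhi : Integrable (fun ω => Real.exp (h (X ω, U ω))) μ)
    (hghi : Integrable (fun ω => g (X ω, U ω) * Real.exp (h (X ω, U ω))) μ)
    (hout : μ[Y | MeasurableSpace.comap (fun ω => (M ω, A ω, X ω, U ω)) inferInstance]
        =ᵐ[μ] fun ω => θ1 * M ω + θ2 * A ω + g (X ω, U ω))
    (hmed : μ[M | MeasurableSpace.comap (fun ω => (A ω, X ω, U ω)) inferInstance]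
        =ᵐ[μ] fun ω => Real.exp (θ3 * A ω + h (X ω, U ω)))
    (hAU : CondIndepFun (MeasurableSpace.comap X m𝓧) hXm.comap_le A U μ)
    (htil : Ω → ℝ)
    (hhtil : htil =ᵐ[μ]
      μ[fun ω => Real.exp (h (X ω, U ω)) | MeasurableSpace.comap X m𝓧]) :
    (μ[fun ω => Y ω - θ1 * M ω - θ2 * A ω
        | MeasurableSpace.comap (fun ω => (A ω, X ω)) inferInstance]
      =ᵐ[μ] μ[fun ω => Y ω - θ1 * M ω - θ2 * A ω | MeasurableSpace.comap X m𝓧])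
    ∧ (μ[fun ω => (Y ω - θ1 * M ω) * (M ω * Real.exp (-θ3 * A ω) - htil ω)
        | MeasurableSpace.comap (fun ω => (A ω, X ω)) inferInstance]
      =ᵐ[μ] μ[fun ω => (Y ω - θ1 * M ω) * (M ω * Real.exp (-θ3 * A ω) - htil ω)
        | MeasurableSpace.comap X m𝓧])
    ∧ (μ[fun ω => M ω * Real.exp (-θ3 * A ω)
        | MeasurableSpace.comap (fun ω => (A ω, X ω)) inferInstance]
      =ᵐ[μ] μ[fun ω => M ω * Real.exp (-θ3 * A ω) | MeasurableSpace.comap X m𝓧]) :=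
  stmt17_general (mΩ := mΩ) (m𝓤 := m𝓤) μ Y A M X U hAm hMm hXm hUm hY hA hMbin θ1 θ2 θ3 g h hg hh
    hgi hhi hout hmed hAU htil hhtil
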